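/- arXiv:1908.01736 — 3 statements merged into one kernel-verified Lean document; each statement's English description precedes it below -/
import Mathlib

section
/- Let V be a real vector space and let a¹,…,aⁿ,b¹,…,bⁿ be linearly independent elements of V* (with 2n ≤ dim V). Suppose u = (uⁱⱼ) and v = (vⁱⱼ) are symmetric n×n matrices whose entries are one-forms lying in the span of the aᵏ and bᵏ, written uⁱⱼ = Σₖ uⁱ_{ajk} aᵏ + Σₖ uⁱ_{bjk} bᵏ and similarly for v. If the torsion-free conditions Σⱼ uⁱⱼ ∧ aʲ + Σⱼ vⁱⱼ ∧ bʲ = 0 and Σⱼ vⁱⱼ ∧ aʲ - Σⱼ uⁱⱼ ∧ bʲ = 0 hold, then uⁱ_{ajk} = -vⁱ_{bjk} and uⁱ_{bjk} = vⁱ_{ajk} for all i,j,k. -/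
/-!
Evaluate the 2-forms on pairs of vectors `e` dual to `(a, b)`. Then `∑ⱼ θⱼ ∧ cʲ = 0` for a
biorthogonal family `c` gives `θₜ(eₛ) = θₛ(eₜ)` (Cartan's lemma). For `θ = (uⁱ, vⁱ)` and
`c = (a, b)` the mixed pairs give `vⁱ_{ajk} = uⁱ_{bkj}` and the `b`-pairs make `vⁱ_{bjk}`
symmetric in `j, k`; the second condition is the first one for `θ = (vⁱ, -uⁱ)` and gives
`uⁱ_{ajk} = -vⁱ_{bkj}` and the symmetry of `uⁱ_{bjk}`.
-/

theorem LinearIndependent.exists_biorthogonal {K ι V : Type*} [Field K] [Finite ι]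
    [DecidableEq ι] [AddCommGroup V] [Module K V] {c : ι → Module.Dual K V} (hc : LinearIndependent K c) :
    ∃ e : ι → V, ∀ i j, c i (e j) = if i = j then 1 else 0 := by
  have hcoe : LinearIndependent K (fun i => ⇑(c i)) :=
    hc.map' (LinearMap.ltoFun K V K K) (LinearMap.ker_eq_bot_of_injective DFunLike.coe_injective)
  have hsurj : Function.Surjective (LinearMap.pi c) := by
    rw [← LinearMap.range_eq_top, eq_top_iff, ← span_flip_eq_top_iff_linearIndependent.mpr hcoe,
      Submodule.span_le]
    exact fun _ ⟨x, hx⟩ => ⟨x, hx⟩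
  choose e he using fun j => hsurj (Pi.single j 1)
  exact ⟨e, fun i j => by simpa [Pi.single_apply] using congrFun (he j) i⟩

theorem sum_smul_apply_of_biorthogonal {R V κ : Type*} [CommRing R] [AddCommGroup V]
    [Module R V] [Fintype κ] [DecidableEq κ] {c : κ → Module.Dual R V} {e : κ → V}
    (he : ∀ i j, c i (e j) = if i = j then 1 else 0) (γ : κ → R) (k : κ) :
    (∑ i, γ i • c i) (e k) = γ k := by
  simp [he]

namespace ExteriorAlgebra

variable {R V : Type*} [CommRing R] [AddCommGroup V] [Module R V]

noncomputable def evalPair (x y : V) : ExteriorAlgebra R (Module.Dual R V) →ₗ[R] R :=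
  liftAlternating fun
    | 2 => Matrix.detRowAlternating.compLinearMap
        (LinearMap.pi fun j : Fin 2 => Module.Dual.eval R V (![x, y] j))
    | _ => 0

@[simp]
theorem evalPair_ι_mul_ι (x y : V) (f g : Module.Dual R V) :
    evalPair x y (ι R f * ι R g) = f x * g y - f y * g x := by
  rw [evalPair, liftAlternating_ι_mul, liftAlternating_ι]
  exact (Matrix.det_fin_two _).trans (by simp)

variable {κ : Type*} [Fintype κ] [DecidableEq κ] {c : κ → Module.Dual R V} {e : κ → V}

theorem cartan_lemma (he : ∀ i j, c i (e j) = if i = j then 1 else 0) {θ : κ → Module.Dual R V}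
    (h : ∑ j, ι R (θ j) * ι R (c j) = 0) (s t : κ) : θ t (e s) = θ s (e t) := by
  have := congrArg (evalPair (e s) (e t)) h
  simpa [he, sub_eq_zero] using this

end ExteriorAlgebra

open ExteriorAlgebra in
theorem stmt_4_general (n : ℕ) (V : Type*) [AddCommGroup V] [Module ℝ V]
    (a b : Fin n → Module.Dual ℝ V)
    (hli : LinearIndependent ℝ (Sum.elim a b))
    (ua ub va vb : Fin n → Fin n → Fin n → ℝ)
    (u v : Fin n → Fin n → Module.Dual ℝ V)
    (hu : ∀ i j, u i j = ∑ k, ua i j k • a k + ∑ k, ub i j k • b k)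
    (hv : ∀ i j, v i j = ∑ k, va i j k • a k + ∑ k, vb i j k • b k)
    (htf1 : ∀ i, (∑ j, ι ℝ (u i j) * ι ℝ (a j)) +
        (∑ j, ι ℝ (v i j) * ι ℝ (b j)) = 0)
    (htf2 : ∀ i, (∑ j, ι ℝ (v i j) * ι ℝ (a j)) -
        (∑ j, ι ℝ (u i j) * ι ℝ (b j)) = 0) :
    ∀ i j k, ua i j k = -vb i j k ∧ ub i j k = va i j k := by
  obtain ⟨e, he⟩ := hli.exists_biorthogonal
  have coord (α β : Fin n → ℝ) (x : Fin n ⊕ Fin n) :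
      (∑ k, α k • a k + ∑ k, β k • b k) (e x) = Sum.elim α β x := by
    simpa [Fintype.sum_sum_type] using sum_smul_apply_of_biorthogonal he (Sum.elim α β) x
  intro i j k
  have h1 := cartan_lemma he (θ := Sum.elim (u i) (v i)) <| by
    simpa [Fintype.sum_sum_type] using htf1 i
  have h2 := cartan_lemma he (θ := Sum.elim (v i) (-u i)) <| by
    simpa [Fintype.sum_sum_type, sub_eq_add_neg] using htf2 i
  have hva := h1 (.inl k) (.inr j)
  have hvb := h1 (.inr j) (.inr k)
  have hua := h2 (.inl k) (.inr j)
  have hub := h2 (.inr j) (.inr k)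
  simp only [Sum.elim_inl, Sum.elim_inr, Pi.neg_apply, LinearMap.neg_apply, hu, hv, coord]
    at hva hvb hua hub
  constructor <;> linarith

open ExteriorAlgebra in
/-- Torsion-free conditions for symmetric matrices of one-forms `u`, `v` in the
span of linearly independent one-forms `a¹,…,aⁿ,b¹,…,bⁿ` force the coefficient
relations `uⁱ_{ajk} = -vⁱ_{bjk}` and `uⁱ_{bjk} = vⁱ_{ajk}`. -/
theorem stmt_4 (n : ℕ) (V : Type*) [AddCommGroup V] [Module ℝ V]
    (a b : Fin n → Module.Dual ℝ V)
    (hdim : (2 * n : Cardinal) ≤ Module.rank ℝ V)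
    (hli : LinearIndependent ℝ (Sum.elim a b))
    (ua ub va vb : Fin n → Fin n → Fin n → ℝ)
    (u v : Fin n → Fin n → Module.Dual ℝ V)
    (hu : ∀ i j, u i j = ∑ k, ua i j k • a k + ∑ k, ub i j k • b k)
    (hv : ∀ i j, v i j = ∑ k, va i j k • a k + ∑ k, vb i j k • b k)
    (husym : ∀ i j, u i j = u j i) (hvsym : ∀ i j, v i j = v j i)
    (htf1 : ∀ i, (∑ j, ι ℝ (u i j) * ι ℝ (a j)) +
        (∑ j, ι ℝ (v i j) * ι ℝ (b j)) = 0)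
    (htf2 : ∀ i, (∑ j, ι ℝ (v i j) * ι ℝ (a j)) -
        (∑ j, ι ℝ (u i j) * ι ℝ (b j)) = 0) :
    ∀ i j k, ua i j k = -vb i j k ∧ ub i j k = va i j k :=
  stmt_4_general n V a b hli ua ub va vb u v hu hv htf1 htf2
end

section
/- With the hypotheses of the torsion-free condition as above (u, v symmetric n×n matrices of one-forms in the span of a¹,…,aⁿ,b¹,…,bⁿ satisfying Σⱼ uⁱⱼ∧aʲ + Σⱼ vⁱⱼ∧bʲ = 0 = Σⱼ vⁱⱼ∧aʲ - Σⱼ uⁱⱼ∧bʲ), the coefficient arrays vⁱ_{ajk} and vⁱ_{bjk} (defined by vⁱⱼ = Σₖ vⁱ_{ajk}aᵏ + Σₖ vⁱ_{bjk}bᵏ) are totally symmetric in all three indices i, j, k. -/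
/-!
Let `e` be the frame dual to the coframe `c = (a, b)`. Evaluating a relation `∑ₛ θₛ ∧ cₛ = 0`
on the pair `(eₜ, eₛ)` gives `θₛ(eₜ) = θₜ(eₛ)` (the symmetric half of Cartan's lemma). For the
second torsion-free equation and `s, t` among the `a`-indices this says `vⁱ_{ajk} = vⁱ_{akj}`, and
the first equation gives `vⁱ_{bjk} = vⁱ_{bkj}` in the same way. Together with the symmetry of `v`
in `i, j` these two transpositions generate all permutations of `(i, j, k)`.
-/

open Module ExteriorAlgebra

theorem Module.Dual.pi_surjective_of_linearIndependent {ι K V : Type*} [Finite ι] [Field K]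
    [AddCommGroup V] [Module K V] {f : ι → Dual K V} (hf : LinearIndependent K f) :
    Function.Surjective (LinearMap.pi f) := by
  have hf' : LinearIndependent K (fun i ↦ ⇑(f i)) :=
    hf.map' (LinearMap.ltoFun K V K K) (LinearMap.ker_eq_bot.mpr DFunLike.coe_injective)
  rw [← LinearMap.range_eq_top, ← span_flip_eq_top_iff_linearIndependent.mpr hf',
    ← Submodule.span_eq (LinearMap.range _)]
  rfl

theorem Module.Dual.exists_biorthogonal_of_linearIndependent {ι K V : Type*} [Finite ι]
    [DecidableEq ι] [Field K] [AddCommGroup V] [Module K V] {f : ι → Dual K V}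
    (hf : LinearIndependent K f) :
    ∃ e : ι → V, ∀ s t, f s (e t) = if s = t then 1 else 0 := by
  choose e he using fun t ↦ pi_surjective_of_linearIndependent hf (Pi.single t 1)
  exact ⟨e, fun s t ↦ by simpa [Pi.single_apply] using congrFun (he t) s⟩

namespace ExteriorAlgebra

variable {R M : Type*} [CommRing R] [AddCommGroup M] [Module R M]

theorem contractLeft_contractLeft_ι_mul_ι (d d' : Dual R M) (x y : M) :
    CliffordAlgebra.contractLeft (Q := 0) d' (CliffordAlgebra.contractLeft (Q := 0) d
      (ι R x * ι R y)) = algebraMap R (ExteriorAlgebra R M) (d x * d' y - d y * d' x) := by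
  rw [CliffordAlgebra.contractLeft_ι_mul, CliffordAlgebra.contractLeft_ι, ← Algebra.commutes,
    ← Algebra.smul_def, map_sub, map_smul, map_smul, CliffordAlgebra.contractLeft_ι,
    CliffordAlgebra.contractLeft_ι]
  simp [Algebra.smul_def]

theorem sum_apply_mul_apply_eq_of_sum_ι_mul_ι_eq_zero {κ : Type*} [Fintype κ] {x y : κ → M}
    (h : ∑ s, ι R (x s) * ι R (y s) = 0) (d d' : Dual R M) :
    ∑ s, d (x s) * d' (y s) = ∑ s, d (y s) * d' (x s) := by
  have := congrArg (fun z ↦ CliffordAlgebra.contractLeft (Q := 0) d'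
    (CliffordAlgebra.contractLeft (Q := 0) d z)) h
  simp only [map_sum, map_zero, contractLeft_contractLeft_ι_mul_ι] at this
  rw [← map_sum, algebraMap_eq_zero_iff, Finset.sum_sub_distrib, sub_eq_zero] at this
  simpa only [mul_comm (d (y _))] using this

end ExteriorAlgebra

section Coframe

variable {R V κ : Type*} [CommRing R] [AddCommGroup V] [Module R V] [Fintype κ] [DecidableEq κ]
  {c : κ → Dual R V} {e : κ → V}

theorem sum_smul_apply_of_biorthogonal_s5 (he : ∀ s t, c s (e t) = if s = t then 1 else 0)
    (γ : κ → R) (t : κ) : (∑ s, γ s • c s) (e t) = γ t := by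
  simp [he]

theorem apply_comm_of_sum_ι_mul_ι_eq_zero (he : ∀ s t, c s (e t) = if s = t then 1 else 0)
    {θ : κ → Dual R V} (h : ∑ s, ι R (θ s) * ι R (c s) = 0) (s t : κ) : θ s (e t) = θ t (e s) := by
  simpa [he] using sum_apply_mul_apply_eq_of_sum_ι_mul_ι_eq_zero h (Dual.eval R V (e t))
    (Dual.eval R V (e s))

end Coframe

def IsTotallySymmetric {α β : Type*} (w : α → α → α → β) : Prop :=
  ∀ i j k, w i j k = w j k i ∧ w i j k = w k i j ∧ w i j k = w i k j ∧
    w i j k = w k j i ∧ w i j k = w j i k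

theorem IsTotallySymmetric.of_swap {α β : Type*} {w : α → α → α → β}
    (h₁₂ : ∀ i j k, w i j k = w j i k) (h₂₃ : ∀ i j k, w i j k = w i k j) :
    IsTotallySymmetric w := fun i j k ↦
  ⟨by rw [h₁₂, h₂₃], by rw [h₂₃, h₁₂], h₂₃ i j k, by rw [h₂₃, h₁₂, h₂₃], h₁₂ i j k⟩

open ExteriorAlgebra in
theorem stmt_5_general (n : ℕ) (V : Type*) [AddCommGroup V] [Module ℝ V]
    (a b : Fin n → Module.Dual ℝ V)
    (hli : LinearIndependent ℝ (Sum.elim a b))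
    (va vb : Fin n → Fin n → Fin n → ℝ)
    (u v : Fin n → Fin n → Module.Dual ℝ V)
    (hv : ∀ i j, v i j = ∑ k, va i j k • a k + ∑ k, vb i j k • b k)
    (hvsym : ∀ i j, v i j = v j i)
    (htf1 : ∀ i, (∑ j, ι ℝ (u i j) * ι ℝ (a j)) +
        (∑ j, ι ℝ (v i j) * ι ℝ (b j)) = 0)
    (htf2 : ∀ i, (∑ j, ι ℝ (v i j) * ι ℝ (a j)) -
        (∑ j, ι ℝ (u i j) * ι ℝ (b j)) = 0) :
    ∀ i j k,
      (va i j k = va j k i ∧ va i j k = va k i j ∧ va i j k = va i k j ∧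
        va i j k = va k j i ∧ va i j k = va j i k) ∧
      (vb i j k = vb j k i ∧ vb i j k = vb k i j ∧ vb i j k = vb i k j ∧
        vb i j k = vb k j i ∧ vb i j k = vb j i k) := by
  obtain ⟨e, he⟩ := Dual.exists_biorthogonal_of_linearIndependent hli
  have hcoef (i j s) : v i j (e s) = Sum.elim (va i j) (vb i j) s := by
    rw [← sum_smul_apply_of_biorthogonal_s5 he (Sum.elim (va i j) (vb i j))]
    simp [hv, Fintype.sum_sum_type]
  have h₁₂ (i j s) : Sum.elim (va i j) (vb i j) s = Sum.elim (va j i) (vb j i) s := by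
    rw [← hcoef, ← hcoef, hvsym]
  -- `htf2 i` reads `∑ₛ θₛ ∧ cₛ = 0` for the coframe `c = (a, b)` and `θ = (vᵢ, -uᵢ)`,
  -- `htf1 i` likewise with `θ = (uᵢ, vᵢ)`.
  have hva : IsTotallySymmetric va := .of_swap (fun i j k ↦ h₁₂ i j (.inl k)) fun i j k ↦ by
    simpa [hcoef] using apply_comm_of_sum_ι_mul_ι_eq_zero he (θ := Sum.elim (v i) (-u i))
      (by simpa [Fintype.sum_sum_type, sub_eq_add_neg] using htf2 i) (.inl j) (.inl k)
  have hvb : IsTotallySymmetric vb := .of_swap (fun i j k ↦ h₁₂ i j (.inr k)) fun i j k ↦ by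
    simpa [hcoef] using apply_comm_of_sum_ι_mul_ι_eq_zero he (θ := Sum.elim (u i) (v i))
      (by simpa [Fintype.sum_sum_type] using htf1 i) (.inr j) (.inr k)
  exact fun i j k ↦ ⟨hva i j k, hvb i j k⟩

open ExteriorAlgebra in
/-- Under the torsion-free conditions, the coefficient arrays `vⁱ_{ajk}` and
`vⁱ_{bjk}` are totally symmetric in all three indices. -/
theorem stmt_5 (n : ℕ) (V : Type*) [AddCommGroup V] [Module ℝ V]
    (a b : Fin n → Module.Dual ℝ V)
    (hli : LinearIndependent ℝ (Sum.elim a b))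
    (ua ub va vb : Fin n → Fin n → Fin n → ℝ)
    (u v : Fin n → Fin n → Module.Dual ℝ V)
    (hu : ∀ i j, u i j = ∑ k, ua i j k • a k + ∑ k, ub i j k • b k)
    (hv : ∀ i j, v i j = ∑ k, va i j k • a k + ∑ k, vb i j k • b k)
    (husym : ∀ i j, u i j = u j i) (hvsym : ∀ i j, v i j = v j i)
    (htf1 : ∀ i, (∑ j, ι ℝ (u i j) * ι ℝ (a j)) +
        (∑ j, ι ℝ (v i j) * ι ℝ (b j)) = 0)
    (htf2 : ∀ i, (∑ j, ι ℝ (v i j) * ι ℝ (a j)) -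
        (∑ j, ι ℝ (u i j) * ι ℝ (b j)) = 0) :
    ∀ i j k,
      (va i j k = va j k i ∧ va i j k = va k i j ∧ va i j k = va i k j ∧
        va i j k = va k j i ∧ va i j k = va j i k) ∧
      (vb i j k = vb j k i ∧ vb i j k = vb k i j ∧ vb i j k = vb i k j ∧
        vb i j k = vb k j i ∧ vb i j k = vb j i k) :=
  stmt_5_general n V a b hli va vb u v hv hvsym htf1 htf2
end

section
/- Let a, b be linearly independent one-forms on a 2-dimensional real vector space. Then the equation 4·a∧b = 0 fails; consequently the system consisting of the 'W = 0' equation a∧bᵀ - b∧aᵀ + 2(a∧b)·Id₁ = 0 in one complex dimension with u = v = 0 has no solution. -/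
/-! Since `b∧a = -a∧b`, the left-hand side of the `W = 0` equation is `4·a∧b`, and `a∧b ≠ 0`
because the wedge products of a linearly independent family stay linearly independent. -/

namespace ExteriorAlgebra

variable {K E : Type*} [Field K] [AddCommGroup E] [Module K E]

theorem ιMulti_ne_zero_of_linearIndependent {n : ℕ} {v : Fin n → E}
    (hv : LinearIndependent K v) :
    ιMulti K n v ≠ 0 := by
  -- `v` itself is the member of the linearly independent family `ιMulti_family K n v`
  -- indexed by the identity embedding `Fin n ↪o Fin n`.
  have h := (exteriorPower.ιMulti_family_linearIndependent_field (n := n) hv).ne_zero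
    (Set.powersetCard.ofFinEmbEquiv (RelEmbedding.refl (· ≤ ·)))
  rwa [Ne, ← Submodule.coe_eq_zero, exteriorPower.ιMulti_family_apply_coe, ιMulti_family,
    Equiv.symm_apply_apply] at h

theorem ι_mul_ι_ne_zero_of_linearIndependent {x y : E} (h : LinearIndependent K ![x, y]) :
    ι K x * ι K y ≠ 0 := by
  simpa [ιMulti_apply, List.ofFn_succ] using ιMulti_ne_zero_of_linearIndependent h

end ExteriorAlgebra

open ExteriorAlgebra in
theorem stmt_14_general (V : Type*) [AddCommGroup V] [Module ℝ V]
    (a b : Module.Dual ℝ V) (hli : LinearIndependent ℝ ![a, b]) :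
    (4 : ℝ) • (ι ℝ a * ι ℝ b) ≠ 0 ∧
      ι ℝ a * ι ℝ b - ι ℝ b * ι ℝ a + (2 : ℝ) • (ι ℝ a * ι ℝ b) ≠ 0 := by
  have hab : (4 : ℝ) • (ι ℝ a * ι ℝ b) ≠ 0 :=
    smul_ne_zero four_ne_zero (ι_mul_ι_ne_zero_of_linearIndependent hli)
  have hba : ι ℝ b * ι ℝ a = -(ι ℝ a * ι ℝ b) := eq_neg_of_add_eq_zero_right (ι_add_mul_swap a b)
  refine ⟨hab, ?_⟩
  convert hab using 1
  rw [hba]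
  module

open ExteriorAlgebra in
/-- For linearly independent one-forms `a`, `b` on a 2-dimensional real vector
space, `4·a∧b ≠ 0`; consequently the `W = 0` equation in one complex dimension
with `u = v = 0`, namely `a∧b - b∧a + 2(a∧b) = 0`, has no solution. -/
theorem stmt_14 (V : Type*) [AddCommGroup V] [Module ℝ V]
    (hdim : Module.finrank ℝ V = 2)
    (a b : Module.Dual ℝ V) (hli : LinearIndependent ℝ ![a, b]) :
    (4 : ℝ) • (ι ℝ a * ι ℝ b) ≠ 0 ∧
      ι ℝ a * ι ℝ b - ι ℝ b * ι ℝ a + (2 : ℝ) • (ι ℝ a * ι ℝ b) ≠ 0 :=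
  stmt_14_general V a b hli
end
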